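/- arXiv:1611.08425 — 3 statements merged into one kernel-verified Lean document; each statement's English description precedes it below -/
import Mathlib

section
/- Let X be a proper CAT(-1) space with base point o. If d(x_n, o) is bounded and {y_n} → ξ' ∈ ∂∞X, then for all (z,z') ∈ X × X, lim_{n→∞} (d_max((x_n,y_n),(z,z')) − d_max((x_n,y_n),(o,o))) = β^o_{ξ'}(z'). -/
open Filter Topology Metric

/-- `m` is a midpoint of `x` and `y`. -/
def IsMidpoint {X : Type*} [MetricSpace X] (x m y : X) : Prop :=
  dist x m = dist x y / 2 ∧ dist m y = dist x y / 2

/-- `X` is a CAT(-1) space: it is geodesic (has midpoints; for complete spaces this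
gives geodesics) and satisfies the hyperbolic median comparison inequality, which for
geodesic spaces is equivalent to the usual comparison-triangle definition with `ℍ²`. -/
def IsCATminus1 (X : Type*) [MetricSpace X] : Prop :=
  (∀ x y : X, ∃ m, IsMidpoint x m y) ∧
    ∀ x y z m : X, IsMidpoint y m z →
      Real.cosh (dist x m) * Real.cosh (dist y z / 2) ≤
        (Real.cosh (dist x y) + Real.cosh (dist x z)) / 2

/-- `X` is a CAT(0) space: it has midpoints and satisfies the CN-inequality of
Bruhat–Tits, equivalent to the comparison-triangle definition with `𝔼²`. -/
def IsCAT0 (X : Type*) [MetricSpace X] : Prop :=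
  (∀ x y : X, ∃ m, IsMidpoint x m y) ∧
    ∀ x y z m : X, IsMidpoint y m z →
      dist x m ^ 2 ≤ dist x y ^ 2 / 2 + dist x z ^ 2 / 2 - dist y z ^ 2 / 4

/-- A geodesic ray (only the restriction of `c` to `[0, ∞)` matters). -/
def IsRay {X : Type*} [MetricSpace X] (c : ℝ → X) : Prop :=
  ∀ s t : ℝ, 0 ≤ s → 0 ≤ t → dist (c s) (c t) = |s - t|

/-- A parametrized (bi-infinite) geodesic, i.e. an isometric embedding `ℝ → X`. -/
def IsGeodesic {X : Type*} [MetricSpace X] (g : ℝ → X) : Prop :=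
  ∀ s t : ℝ, dist (g s) (g t) = |s - t|

/-- Two rays are asymptotic, i.e. determine the same point of `∂∞X`. -/
def RayEquiv {X : Type*} [MetricSpace X] (c c' : ℝ → X) : Prop :=
  ∃ C : ℝ, ∀ t : ℝ, 0 ≤ t → dist (c t) (c' t) ≤ C

/-- The Busemann function `β^{c 0}_{c(∞)}` of the ray `c`, normalized to vanish at `c 0`.
Since `t ↦ dist y (c t) - t` is nonincreasing and bounded below, this infimum is the
limit `lim_{t → ∞} (dist y (c t) - t)`. -/
noncomputable def busemann {X : Type*} [MetricSpace X] (c : ℝ → X) (y : X) : ℝ :=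
  sInf {r : ℝ | ∃ t : ℝ, 0 ≤ t ∧ r = dist y (c t) - t}

/-- `σ` restricted to `[a, b]` is a geodesic segment. -/
def IsSegParam {X : Type*} [MetricSpace X] (σ : ℝ → X) (a b : ℝ) : Prop :=
  ∀ s t : ℝ, s ∈ Set.Icc a b → t ∈ Set.Icc a b → dist (σ s) (σ t) = |s - t|

/-- Cone-topology convergence of the sequence `x` to the boundary point `c(∞) ∈ ∂∞X`,
where `c` is a geodesic ray issued from the base point `o`: the distances to `o` diverge
and the geodesic segments `σ n` from `o` to `x n` converge pointwise to `c`. -/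
def TendstoRay {X : Type*} [MetricSpace X] (x : ℕ → X) (o : X) (c : ℝ → X) : Prop :=
  IsRay c ∧ c 0 = o ∧
  Tendsto (fun n => dist o (x n)) atTop atTop ∧
  ∃ σ : ℕ → ℝ → X,
    (∀ n, σ n 0 = o ∧ σ n (dist o (x n)) = x n ∧ IsSegParam (σ n) 0 (dist o (x n))) ∧
    ∀ t : ℝ, 0 ≤ t → Tendsto (fun n => σ n t) atTop (𝓝 (c t))

/-!
Once `d(o, y n) → ∞` while `x n` stays bounded, the `y`-coordinate realizes both maxima, so the
expression is eventually `d(z', y n) - d(o, y n)`; the point is that this converges to the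
Busemann function of the limiting ray `c'`.

Along the geodesic segment `σ` from `o` to `y n`, the function `g s = d(z', σ s) - s` is
nonincreasing, and the CAT(-1) median inequality at the midpoint `σ (s/2)` gives
`exp (g (s/2)) ≤ exp (g s) + C e^{-s}` with `C` depending only on `d(z', o)`. Halving from
`d(o, y n)` down to a fixed time `T`, the errors form a geometric series, so
`exp (g T) ≤ exp (d(z', y n) - d(o, y n)) + C e^{-T}`. Letting `n → ∞` (`σ n T → c' T`) and
then `T → ∞` bounds the liminf from below by the Busemann function, while monotonicity of `g`
bounds the limsup from above.
-/

open Real Set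

lemma exp_add_le_of_cosh_mul_le {A B D E : ℝ} (hE : 0 ≤ E)
    (h : cosh A * cosh B ≤ (cosh D + cosh E) / 2) :
    exp (A + B) ≤ exp E + (2 * cosh D + 1) := by
  have hA : exp A ≤ 2 * cosh A := by rw [cosh_eq]; linarith [exp_pos (-A)]
  have hB : exp B ≤ 2 * cosh B := by rw [cosh_eq]; linarith [exp_pos (-B)]
  have hE' : 2 * cosh E ≤ exp E + 1 := by
    rw [cosh_eq]; linarith [exp_le_one_iff.2 (neg_nonpos.2 hE)]
  calc exp (A + B) = exp A * exp B := exp_add A B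
    _ ≤ (2 * cosh A) * (2 * cosh B) :=
        mul_le_mul hA hB (exp_pos B).le (by linarith [one_le_cosh A])
    _ ≤ exp E + (2 * cosh D + 1) := by linarith

-- Doubling from `s` towards `L`, the errors `C e^{-2^j s}` sum to at most `C e^{-s}`,
-- since `2 e^{-2t} ≤ e^{-t}` once `t ≥ 2`.
lemma le_add_mul_exp_neg_of_halving {F : ℝ → ℝ} {L C : ℝ} (hC : 0 ≤ C)
    (hF : AntitoneOn F (Icc 0 L)) (hhalf : ∀ s ∈ Icc 0 L, F (s / 2) ≤ F s + C * exp (-s))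
    {s : ℝ} (hs : 2 ≤ s) (hsL : s ≤ L) :
    F s ≤ F L + C * exp (-s) := by
  obtain ⟨k, hk⟩ : ∃ k : ℕ, L ≤ 2 ^ k * s := by
    obtain ⟨k, hk⟩ := pow_unbounded_of_one_lt (L / s) (one_lt_two (α := ℝ))
    exact ⟨k, ((div_lt_iff₀ (by linarith)).1 hk).le⟩
  induction k generalizing s with
  | zero =>
    obtain rfl : s = L := le_antisymm hsL (by simpa using hk)
    linarith [mul_nonneg hC (exp_pos (-s)).le]
  | succ k ih =>
    by_cases h2s : 2 * s ≤ L
    · have hdouble := hhalf (2 * s) ⟨by linarith, h2s⟩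
      rw [mul_div_cancel_left₀ s two_ne_zero] at hdouble
      have hrest := ih (by linarith) h2s (by rw [pow_succ] at hk; linarith)
      have hgeom : 2 * exp (-(2 * s)) ≤ exp (-s) := by
        have h3 : 3 ≤ exp s := by linarith [add_one_le_exp s]
        have hinv : exp (-s) * exp s = 1 := by rw [← exp_add, neg_add_cancel, exp_zero]
        rw [show -(2 * s) = -s + -s by ring, exp_add]
        nlinarith [exp_pos (-s)]
      linarith [mul_le_mul_of_nonneg_left hgeom hC]
    · push Not at h2s
      have hL : L / 2 ∈ Icc 0 L := ⟨by linarith, by linarith⟩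
      have hmono := hF hL ⟨by linarith, hsL⟩ (by linarith)
      have hend := hhalf L ⟨by linarith, le_rfl⟩
      have herr : exp (-L) ≤ exp (-s) := exp_le_exp.2 (by linarith)
      linarith [mul_le_mul_of_nonneg_left herr hC]

section Geometry

variable {X : Type*} [MetricSpace X]

lemma IsCATminus1.exp_dist_midpoint_le (hX : IsCATminus1 X) {p m q : X}
    (hm : IsMidpoint p m q) (z : X) :
    exp (dist z m - dist p q / 2) ≤
      exp (dist z q - dist p q) + (2 * cosh (dist z p) + 1) * exp (-dist p q) := by
  have key := exp_add_le_of_cosh_mul_le dist_nonneg (hX.2 z p q m hm)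
  calc exp (dist z m - dist p q / 2)
      = exp (dist z m + dist p q / 2) * exp (-dist p q) := by rw [← exp_add]; ring_nf
    _ ≤ (exp (dist z q) + (2 * cosh (dist z p) + 1)) * exp (-dist p q) :=
        mul_le_mul_of_nonneg_right key (exp_pos _).le
    _ = exp (dist z q - dist p q) + (2 * cosh (dist z p) + 1) * exp (-dist p q) := by
        rw [add_mul, ← exp_add, sub_eq_add_neg]

namespace IsSegParam

variable {σ : ℝ → X} {L : ℝ}

lemma dist_apply_zero (hσ : IsSegParam σ 0 L) {s : ℝ} (hs : s ∈ Icc 0 L) :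
    dist (σ 0) (σ s) = s := by
  rw [hσ 0 s (left_mem_Icc.2 (hs.1.trans hs.2)) hs, zero_sub, abs_neg, abs_of_nonneg hs.1]

lemma isMidpoint_half (hσ : IsSegParam σ 0 L) {s : ℝ} (hs : s ∈ Icc 0 L) :
    IsMidpoint (σ 0) (σ (s / 2)) (σ s) := by
  have hs2 : s / 2 ∈ Icc 0 L := ⟨by linarith [hs.1], by linarith [hs.1, hs.2]⟩
  refine ⟨by rw [hσ.dist_apply_zero hs2, hσ.dist_apply_zero hs], ?_⟩
  rw [hσ _ _ hs2 hs, hσ.dist_apply_zero hs, abs_sub_comm, abs_of_nonneg (by linarith [hs.1])]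
  ring

lemma antitoneOn_dist_sub (hσ : IsSegParam σ 0 L) (z : X) :
    AntitoneOn (fun s => dist z (σ s) - s) (Icc 0 L) := by
  intro s hs t ht hst
  have htri := dist_triangle z (σ s) (σ t)
  rw [hσ s t hs ht, abs_sub_comm, abs_of_nonneg (sub_nonneg.2 hst)] at htri
  simp only
  linarith

end IsSegParam

lemma IsCATminus1.exp_dist_sub_le_of_isSegParam (hX : IsCATminus1 X) {σ : ℝ → X} {L : ℝ}
    (hσ : IsSegParam σ 0 L) (z : X) {s : ℝ} (hs : 2 ≤ s) (hsL : s ≤ L) :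
    exp (dist z (σ s) - s) ≤
      exp (dist z (σ L) - L) + (2 * cosh (dist z (σ 0)) + 1) * exp (-s) := by
  refine le_add_mul_exp_neg_of_halving (F := fun s => exp (dist z (σ s) - s)) (by positivity)
    (exp_monotone.comp_antitoneOn (hσ.antitoneOn_dist_sub z)) (fun t ht => ?_) hs hsL
  simpa only [hσ.dist_apply_zero ht] using hX.exp_dist_midpoint_le (hσ.isMidpoint_half ht) z

section Busemann

variable {c : ℝ → X}

lemma IsRay.busemann_le (hc : IsRay c) (z : X) {t : ℝ} (ht : 0 ≤ t) :
    busemann c z ≤ dist z (c t) - t := by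
  refine csInf_le ⟨-dist z (c 0), ?_⟩ ⟨t, ht, rfl⟩
  rintro r ⟨u, hu, rfl⟩
  have htri := dist_triangle (c 0) z (c u)
  rw [hc 0 u le_rfl hu, zero_sub, abs_neg, abs_of_nonneg hu, dist_comm (c 0) z] at htri
  linarith

lemma exists_dist_sub_lt_of_busemann_lt {z : X} {b : ℝ} (hb : busemann c z < b) :
    ∃ t, 0 ≤ t ∧ dist z (c t) - t < b := by
  obtain ⟨_, ⟨t, ht, rfl⟩, hlt⟩ :=
    exists_lt_of_csInf_lt (s := {r | ∃ t, 0 ≤ t ∧ r = dist z (c t) - t})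
      ⟨_, 0, le_rfl, rfl⟩ hb
  exact ⟨t, ht, hlt⟩

end Busemann

theorem IsCATminus1.tendsto_dist_sub_dist_busemann (hX : IsCATminus1 X) {o : X} {c : ℝ → X}
    {y : ℕ → X} (hy : TendstoRay y o c) (z : X) :
    Tendsto (fun n => dist z (y n) - dist o (y n)) atTop (𝓝 (busemann c z)) := by
  obtain ⟨hc, -, hdist, σ, hσ, hσc⟩ := hy
  have hσt : ∀ t, 0 ≤ t →
      Tendsto (fun n => dist z (σ n t) - t) atTop (𝓝 (dist z (c t) - t)) :=
    fun t ht => (tendsto_const_nhds.dist (hσc t ht)).sub_const t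
  rw [tendsto_order]
  refine ⟨fun b hb => ?_, fun b hb => ?_⟩
  · set C := 2 * cosh (dist z o) + 1
    obtain ⟨T, hTC, hT⟩ : ∃ T, C * exp (-T) < exp (busemann c z) - exp b ∧ 2 ≤ T :=
      (((tendsto_exp_neg_atTop_nhds_zero.const_mul C).eventually
        (gt_mem_nhds (by simpa using exp_lt_exp.2 hb))).and (eventually_ge_atTop 2)).exists
    have hβ : exp (busemann c z) ≤ exp (dist z (c T) - T) :=
      exp_le_exp.2 (hc.busemann_le z (by linarith))
    have hlim := (continuous_exp.tendsto _).comp (hσt T (by linarith))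
    filter_upwards [hdist.eventually_ge_atTop T,
      hlim.eventually_const_lt (show exp b + C * exp (-T) < _ by linarith)] with n hTn hn
    have hest := hX.exp_dist_sub_le_of_isSegParam (hσ n).2.2 z hT hTn
    rw [(hσ n).1, (hσ n).2.1] at hest
    exact exp_lt_exp.1 (by simp only [Function.comp_apply] at hn; linarith)
  · obtain ⟨t, ht, hlt⟩ := exists_dist_sub_lt_of_busemann_lt hb
    filter_upwards [hdist.eventually_ge_atTop t, (hσt t ht).eventually_lt_const hlt] with n htn hn
    have hmono := (hσ n).2.2.antitoneOn_dist_sub z ⟨ht, htn⟩ ⟨ht.trans htn, le_rfl⟩ htn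
    simp only [(hσ n).2.1] at hmono
    linarith

lemma max_dist_sub_max_dist_eventuallyEq {o : X} {x y : ℕ → X}
    (hx : ∃ R : ℝ, ∀ n, dist (x n) o ≤ R) (hy : Tendsto (fun n => dist o (y n)) atTop atTop)
    (z z' : X) :
    (fun n => max (dist (x n) z) (dist (y n) z') - max (dist (x n) o) (dist (y n) o))
      =ᶠ[atTop] fun n => dist z' (y n) - dist o (y n) := by
  obtain ⟨R, hR⟩ := hx
  filter_upwards [hy.eventually_ge_atTop (R + dist o z + dist o z')] with n hn
  have hxz : dist (x n) z ≤ R + dist o z := by linarith [dist_triangle (x n) o z, hR n]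
  have hyz' : R + dist o z ≤ dist (y n) z' := by
    linarith [dist_triangle o z' (y n), dist_comm z' (y n)]
  have hxo : dist (x n) o ≤ dist (y n) o := by
    linarith [hR n, dist_comm (y n) o, dist_nonneg (x := o) (y := z),
      dist_nonneg (x := o) (y := z')]
  rw [max_eq_right (hxz.trans hyz'), max_eq_right hxo, dist_comm (y n) z', dist_comm (y n) o]

end Geometry

theorem dmax_horofunction_singular_one_factor_general {X : Type*} [MetricSpace X]
    (hX : IsCATminus1 X) (o : X) (c' : ℝ → X) (x y : ℕ → X)
    (hx : ∃ R : ℝ, ∀ n, dist (x n) o ≤ R)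
    (hy : TendstoRay y o c') :
    ∀ z z' : X,
      Tendsto (fun n => max (dist (x n) z) (dist (y n) z')
          - max (dist (x n) o) (dist (y n) o)) atTop (𝓝 (busemann c' z')) := fun z z' =>
  (hX.tendsto_dist_sub_dist_busemann hy z').congr'
    (max_dist_sub_max_dist_eventuallyEq hx hy.2.2.1 z z').symm

/-- Case (I): if `d(x n, o)` is bounded and `y n → ξ'` in `∂∞X` (with `c'` the ray
from `o` to `ξ'`), then the normalized max-distance functions converge pointwise to
`β^o_ξ'(z')`. -/
theorem dmax_horofunction_singular_one_factor {X : Type*} [MetricSpace X] [ProperSpace X]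
    (hX : IsCATminus1 X) (o : X) (c' : ℝ → X) (x y : ℕ → X)
    (hx : ∃ R : ℝ, ∀ n, dist (x n) o ≤ R)
    (hy : TendstoRay y o c') :
    ∀ z z' : X,
      Tendsto (fun n => max (dist (x n) z) (dist (y n) z')
          - max (dist (x n) o) (dist (y n) o)) atTop (𝓝 (busemann c' z')) :=
  dmax_horofunction_singular_one_factor_general hX o c' x y hx hy
end

section
/- Let X be a proper CAT(-1) space with base point o. If {x_n} → ξ ∈ ∂∞X, {y_n} → ξ' ∈ ∂∞X and d(x_n,o) − d(y_n,o) → +∞, then for all (z,z') ∈ X × X, lim_{n→∞} (d_max((x_n,y_n),(z,z')) − d_max((x_n,y_n),(o,o))) = β^o_ξ(z). -/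
open Filter Topology Metric

/- ----------------- auxiliary lemmas ----------------- -/

lemma sinh_ge_self {s : ℝ} (hs : 0 ≤ s) : s ≤ Real.sinh s := by
  rcases eq_or_lt_of_le hs with h | h
  · simp [← h]
  · exact (Real.self_lt_sinh_iff.2 h).le

lemma sinh_nonneg' {s : ℝ} (hs : 0 ≤ s) : 0 ≤ Real.sinh s := by
  rw [← Real.sinh_zero]; exact Real.sinh_le_sinh.2 hs

lemma sinh_le_cosh' (s : ℝ) : Real.sinh s ≤ Real.cosh s := by
  have h1 := Real.cosh_sub_sinh s
  have h2 := Real.exp_pos (-s)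
  linarith

/-- Pure real-arithmetic core of the halving step. -/
lemma step_real (r L Dm D : ℝ) (hr0 : 0 ≤ r) (hD0 : 0 ≤ D) (hDm0 : 0 ≤ Dm)
    (hl : 2 * r + 3 ≤ L) (hDm : L / 2 - r ≤ Dm)
    (hkey : Real.cosh Dm * Real.cosh (L / 2) ≤ (Real.cosh r + Real.cosh D) / 2) :
    (Dm - L / 2) - Real.cosh r / Real.sinh (L - r - 1) ≤ D - L := by
  have hLpos : 0 < L - r - 1 := by linarith
  have hsinh_pos : 0 < Real.sinh (L - r - 1) := Real.sinh_pos_iff.2 hLpos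
  set cδ := Real.cosh r / Real.sinh (L - r - 1) with hcδ
  have hcδpos : 0 < cδ := div_pos (Real.cosh_pos r) hsinh_pos
  have hcδ1 : cδ ≤ 1 := by
    rw [hcδ, div_le_one hsinh_pos]
    have h1 : Real.cosh r ≤ Real.sinh (r + 2) := by
      rw [Real.sinh_add]
      have hs2 : (1:ℝ) ≤ Real.sinh 2 := by
        rw [Real.sinh_eq]
        have he2 : (3:ℝ) ≤ Real.exp 2 := by
          have := Real.add_one_le_exp (2:ℝ); linarith
        have he2' : Real.exp (-2) ≤ 1 := by
          rw [Real.exp_le_one_iff]; norm_num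
        linarith
      have hsr : 0 ≤ Real.sinh r := sinh_nonneg' hr0
      have hc2 : 0 < Real.cosh 2 := Real.cosh_pos 2
      nlinarith [Real.cosh_pos r]
    have h2 : Real.sinh (r + 2) ≤ Real.sinh (L - r - 1) :=
      Real.sinh_le_sinh.2 (by linarith)
    linarith
  set S := Dm + L / 2 with hSdef
  have hS1 : L - r ≤ S := by rw [hSdef]; linarith
  have h3 : Real.cosh S - Real.cosh r ≤ Real.cosh D := by
    have hca := Real.cosh_add Dm (L / 2)
    have hs1 : Real.sinh Dm ≤ Real.cosh Dm := sinh_le_cosh' Dm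
    have hs2 : Real.sinh (L / 2) ≤ Real.cosh (L / 2) := sinh_le_cosh' (L / 2)
    have hn2 : 0 ≤ Real.sinh (L / 2) := sinh_nonneg' (by linarith)
    have hprod : Real.sinh Dm * Real.sinh (L / 2) ≤ Real.cosh Dm * Real.cosh (L / 2) :=
      mul_le_mul hs1 hs2 hn2 (Real.cosh_pos Dm).le
    have hS2 : Real.cosh S ≤ 2 * (Real.cosh Dm * Real.cosh (L / 2)) := by
      rw [hSdef, hca]; linarith
    linarith
  have h4 : Real.cosh (S - cδ) ≤ Real.cosh S - Real.cosh r := by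
    have hca : Real.cosh S = Real.cosh (S - cδ) * Real.cosh cδ
        + Real.sinh (S - cδ) * Real.sinh cδ := by
      have h := Real.cosh_add (S - cδ) cδ
      rw [sub_add_cancel] at h
      exact h
    have h1 : Real.cosh r ≤ Real.sinh (S - cδ) * Real.sinh cδ := by
      have hsc : cδ ≤ Real.sinh cδ := sinh_ge_self hcδpos.le
      have hSc : Real.sinh (L - r - 1) ≤ Real.sinh (S - cδ) :=
        Real.sinh_le_sinh.2 (by linarith)
      have h2 : Real.sinh (L - r - 1) * cδ ≤ Real.sinh (S - cδ) * Real.sinh cδ :=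
        mul_le_mul hSc hsc hcδpos.le (le_trans hsinh_pos.le hSc)
      rw [hcδ, mul_div_cancel₀ _ (ne_of_gt hsinh_pos)] at h2
      exact h2
    have h2 : 1 ≤ Real.cosh cδ := Real.one_le_cosh cδ
    nlinarith [Real.cosh_pos (S - cδ)]
  have h5 : Real.cosh (S - cδ) ≤ Real.cosh D := by linarith
  have h6 : S - cδ ≤ D := by
    by_contra hcon
    push_neg at hcon
    have hSc0 : 0 ≤ S - cδ := by linarith
    have : Real.cosh D < Real.cosh (S - cδ) := by
      rw [Real.cosh_lt_cosh, abs_of_nonneg hD0, abs_of_nonneg hSc0]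
      exact hcon
    linarith
  have hSD : Dm + L / 2 - cδ ≤ D := by rw [hSdef] at h6; linarith
  linarith

/-- One halving step: the distance excess over a midpoint decays. -/
lemma dmax_step {X : Type*} [MetricSpace X] (hX : IsCATminus1 X) (z o m xx : X)
    (hm : IsMidpoint o m xx) (hl : 2 * dist z o + 3 ≤ dist o xx) :
    (dist z m - dist o xx / 2) - Real.cosh (dist z o) / Real.sinh (dist o xx - dist z o - 1)
      ≤ dist z xx - dist o xx := by
  have hkey := hX.2 z o xx m hm
  have hDm : dist o xx / 2 - dist z o ≤ dist z m := by
    have htri := dist_triangle o z m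
    have hom : dist o m = dist o xx / 2 := hm.1
    have hoz : dist o z = dist z o := dist_comm o z
    linarith
  exact step_real (dist z o) (dist o xx) (dist z m) (dist z xx)
    dist_nonneg dist_nonneg dist_nonneg hl hDm hkey

/-- Iterated doubling: along a geodesic segment issued from `o`,
`dist z (σ s) - s` decreases by at most `cosh r / (u - r - 1)` from level `u` on. -/
lemma dmax_iter {X : Type*} [MetricSpace X] (hX : IsCATminus1 X) (o z : X)
    (σ : ℝ → X) (a : ℝ) (h0 : σ 0 = o) (hseg : IsSegParam σ 0 a) :
    ∀ K : ℕ, ∀ u : ℝ, 2 * dist z o + 3 ≤ u → u * 2 ^ K ≤ a →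
      (dist z (σ u) - u) - Real.cosh (dist z o) / (u - dist z o - 1)
        ≤ dist z (σ (u * 2 ^ K)) - u * 2 ^ K := by
  intro K
  induction K with
  | zero =>
    intro u hu hua
    have hr0 : 0 ≤ dist z o := dist_nonneg
    have hpos : 0 < u - dist z o - 1 := by linarith
    have hnn : 0 ≤ Real.cosh (dist z o) / (u - dist z o - 1) :=
      div_nonneg (Real.cosh_pos _).le hpos.le
    have h1 : u * 2 ^ (0:ℕ) = u := by norm_num
    rw [h1]
    linarith
  | succ K ih =>
    intro u hu hua
    have hr0 : 0 ≤ dist z o := dist_nonneg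
    have hu0 : 0 < u := by linarith
    have h2K : (1:ℝ) ≤ 2 ^ K := one_le_pow₀ (by norm_num)
    have hpow : (2:ℝ) * u * 2 ^ K = u * 2 ^ (K + 1) := by ring
    have h2u_le : 2 * u ≤ a := by nlinarith
    have ha0 : 0 ≤ a := by linarith
    have hmemo : (0:ℝ) ∈ Set.Icc (0:ℝ) a := ⟨le_refl 0, ha0⟩
    have hmemu : u ∈ Set.Icc (0:ℝ) a := ⟨hu0.le, by linarith⟩
    have hmem2u : 2 * u ∈ Set.Icc (0:ℝ) a := ⟨by linarith, h2u_le⟩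
    have dxx : dist o (σ (2 * u)) = 2 * u := by
      have h := hseg 0 (2 * u) hmemo hmem2u
      rw [h0] at h
      rw [h, abs_of_nonpos (by linarith)]; ring
    have dm1 : dist o (σ u) = u := by
      have h := hseg 0 u hmemo hmemu
      rw [h0] at h
      rw [h, abs_of_nonpos (by linarith)]; ring
    have dm2 : dist (σ u) (σ (2 * u)) = u := by
      have h := hseg u (2 * u) hmemu hmem2u
      rw [h, abs_of_nonpos (by linarith)]; ring
    have hmid : IsMidpoint o (σ u) (σ (2 * u)) := by
      constructor
      · rw [dm1, dxx]; ring
      · rw [dm2, dxx]; ring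
    have hstep := dmax_step hX z o (σ u) (σ (2 * u)) hmid (by rw [dxx]; linarith)
    rw [dxx] at hstep
    have hih := ih (2 * u) (by linarith) (by rw [hpow]; exact hua)
    rw [hpow] at hih
    have hpos1 : 0 < 2 * u - dist z o - 1 := by linarith
    have hpos2 : 0 < u - dist z o - 1 := by linarith
    have hsinh1 : 2 * u - dist z o - 1 ≤ Real.sinh (2 * u - dist z o - 1) :=
      sinh_ge_self hpos1.le
    have hsinhpos : 0 < Real.sinh (2 * u - dist z o - 1) := by linarith
    have hcosh : 0 < Real.cosh (dist z o) := Real.cosh_pos _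
    have hb1 : Real.cosh (dist z o) / Real.sinh (2 * u - dist z o - 1)
        ≤ Real.cosh (dist z o) / (2 * u - dist z o - 1) := by
      rw [div_le_div_iff₀ hsinhpos hpos1]
      nlinarith
    have hb3 : Real.cosh (dist z o) / (2 * u - dist z o - 1)
        + Real.cosh (dist z o) / (2 * u - dist z o - 1)
        ≤ Real.cosh (dist z o) / (u - dist z o - 1) := by
      rw [← add_div, div_le_div_iff₀ hpos1 hpos2]
      nlinarith
    have hL2 : (2:ℝ) * u / 2 = u := by ring
    rw [hL2] at hstep
    linarith

/-- Monotonicity of `s ↦ dist z (σ s) - s` along a segment. -/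
lemma dmax_g_mono {X : Type*} [MetricSpace X] (z : X) (σ : ℝ → X) (a s s' : ℝ)
    (hseg : IsSegParam σ 0 a) (h0 : 0 ≤ s) (hss : s ≤ s') (hsa : s' ≤ a) :
    dist z (σ s') - s' ≤ dist z (σ s) - s := by
  have h1 := dist_triangle z (σ s) (σ s')
  have h2 : dist (σ s) (σ s') = s' - s := by
    rw [hseg s s' ⟨h0, le_trans hss hsa⟩ ⟨le_trans h0 hss, hsa⟩,
      abs_of_nonpos (by linarith)]
    ring
  linarith

lemma exists_pow_between {u a : ℝ} (hu : 0 < u) (ha : u ≤ a) :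
    ∃ K : ℕ, u * 2 ^ K ≤ a ∧ a < u * 2 ^ (K + 1) := by
  have h : ∃ k : ℕ, a < u * 2 ^ k := by
    obtain ⟨k, hk⟩ := pow_unbounded_of_one_lt (a / u) (by norm_num : (1:ℝ) < 2)
    refine ⟨k, ?_⟩
    rw [div_lt_iff₀ hu] at hk
    linarith
  classical
  have hk0 : Nat.find h ≠ 0 := by
    intro h0
    have hs := Nat.find_spec h
    rw [h0] at hs
    simp only [pow_zero, mul_one] at hs
    linarith
  obtain ⟨K, hK⟩ := Nat.exists_eq_succ_of_ne_zero hk0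
  have hs := Nat.find_spec h
  rw [hK] at hs
  refine ⟨K, ?_, hs⟩
  by_contra hcon
  push_neg at hcon
  exact Nat.find_min h (by omega : K < Nat.find h) hcon

/-- The key convergence: horofunctions of a sequence tending to `c(∞)` in the cone
topology converge to the Busemann function of `c`. -/
lemma busemann_key {X : Type*} [MetricSpace X] (hX : IsCATminus1 X) (o : X)
    (c : ℝ → X) (x : ℕ → X) (hx : TendstoRay x o c) (z : X) :
    Tendsto (fun n => dist z (x n) - dist o (x n)) atTop (𝓝 (busemann c z)) := by
  obtain ⟨hray, hc0, hdist, σ, hσ, hσc⟩ := hx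
  have hr0 : 0 ≤ dist z o := dist_nonneg
  have hSne : ({s : ℝ | ∃ t : ℝ, 0 ≤ t ∧ s = dist z (c t) - t}).Nonempty :=
    ⟨dist z (c 0) - 0, 0, le_refl 0, rfl⟩
  have hct : ∀ t : ℝ, 0 ≤ t → dist o (c t) = t := by
    intro t ht
    have h := hray 0 t le_rfl ht
    rw [hc0] at h
    rw [h, abs_of_nonpos (by linarith)]; ring
  have hSbd : BddBelow {s : ℝ | ∃ t : ℝ, 0 ≤ t ∧ s = dist z (c t) - t} := by
    refine ⟨-(dist z o), ?_⟩
    rintro s ⟨t, ht, rfl⟩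
    have h1 := dist_triangle o z (c t)
    have h2 := hct t ht
    have h3 : dist o z = dist z o := dist_comm o z
    linarith
  have hbuse : busemann c z = sInf {s : ℝ | ∃ t : ℝ, 0 ≤ t ∧ s = dist z (c t) - t} := rfl
  have hble : ∀ t : ℝ, 0 ≤ t → busemann c z ≤ dist z (c t) - t := by
    intro t ht
    rw [hbuse]
    exact csInf_le hSbd ⟨t, ht, rfl⟩
  rw [Metric.tendsto_nhds]
  intro ε hε
  obtain ⟨s, hsS, hslt⟩ := Real.lt_sInf_add_pos hSne (half_pos hε)
  obtain ⟨t, ht0, rfl⟩ := hsS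
  rw [← hbuse] at hslt
  have hconv_t := Metric.tendsto_nhds.1 (hσc t ht0) (ε/4) (by linarith)
  have hA := hdist.eventually_ge_atTop t
  set u := max (2 * dist z o + 3) (dist z o + 1 + 4 * Real.cosh (dist z o) / ε) with hudef
  have hu1 : 2 * dist z o + 3 ≤ u := le_max_left _ _
  have hu0 : 0 < u := by linarith
  have hu2 : Real.cosh (dist z o) / (u - dist z o - 1) ≤ ε / 4 := by
    have h1 : dist z o + 1 + 4 * Real.cosh (dist z o) / ε ≤ u := le_max_right _ _
    have hc : 0 < Real.cosh (dist z o) := Real.cosh_pos _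
    have hd : 0 < u - dist z o - 1 := by linarith
    rw [div_le_iff₀ hd]
    have h2 : 4 * Real.cosh (dist z o) / ε ≤ u - dist z o - 1 := by linarith
    have h3 : 4 * Real.cosh (dist z o) / ε * ε = 4 * Real.cosh (dist z o) :=
      div_mul_cancel₀ _ (ne_of_gt hε)
    nlinarith
  have hB := hdist.eventually_ge_atTop (2 * u)
  have hconv_u := Metric.tendsto_nhds.1 (hσc (2 * u) (by linarith)) (ε/4) (by linarith)
  filter_upwards [hA, hB, hconv_t, hconv_u] with n hta hua hct' hcu
  obtain ⟨hσ0, hσend, hσseg⟩ := hσ n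
  have hup : dist z (x n) - dist o (x n) < busemann c z + ε := by
    have hmono : dist z (σ n (dist o (x n))) - dist o (x n) ≤ dist z (σ n t) - t :=
      dmax_g_mono z (σ n) (dist o (x n)) t (dist o (x n)) hσseg ht0 hta le_rfl
    rw [hσend] at hmono
    have h1 : dist z (σ n t) ≤ dist z (c t) + ε / 4 := by
      have h := dist_triangle z (c t) (σ n t)
      have h' : dist (c t) (σ n t) = dist (σ n t) (c t) := dist_comm _ _
      rw [h'] at h
      linarith [hct']
    linarith
  have hlow : busemann c z - ε < dist z (x n) - dist o (x n) := by
    have hua' : u ≤ dist o (x n) := by linarith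
    obtain ⟨K, hK1, hK2⟩ := exists_pow_between hu0 hua'
    have h2K : (0:ℝ) < 2 ^ K := by positivity
    have hu'2K : dist o (x n) / 2 ^ K * 2 ^ K = dist o (x n) :=
      div_mul_cancel₀ _ (ne_of_gt h2K)
    have hu'ge : u ≤ dist o (x n) / 2 ^ K := by
      rw [le_div_iff₀ h2K]; exact hK1
    have hu'lt : dist o (x n) / 2 ^ K < 2 * u := by
      rw [div_lt_iff₀ h2K]
      calc dist o (x n) < u * 2 ^ (K + 1) := hK2
        _ = 2 * u * 2 ^ K := by ring
    have hiter := dmax_iter hX o z (σ n) (dist o (x n)) hσ0 hσseg K (dist o (x n) / 2 ^ K)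
      (by linarith) (le_of_eq hu'2K)
    rw [hu'2K, hσend] at hiter
    have hmono : dist z (σ n (2 * u)) - 2 * u
        ≤ dist z (σ n (dist o (x n) / 2 ^ K)) - dist o (x n) / 2 ^ K :=
      dmax_g_mono z (σ n) (dist o (x n)) (dist o (x n) / 2 ^ K) (2 * u) hσseg
        (by linarith) hu'lt.le hua
    have hdivle : Real.cosh (dist z o) / (dist o (x n) / 2 ^ K - dist z o - 1)
        ≤ Real.cosh (dist z o) / (u - dist z o - 1) := by
      have hp1 : 0 < u - dist z o - 1 := by linarith
      have hp2 : 0 < dist o (x n) / 2 ^ K - dist z o - 1 := by linarith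
      rw [div_le_div_iff₀ hp2 hp1]
      nlinarith [Real.cosh_pos (dist z o)]
    have h1 : dist z (c (2 * u)) - ε / 4 ≤ dist z (σ n (2 * u)) := by
      have h := dist_triangle z (σ n (2 * u)) (c (2 * u))
      linarith [hcu]
    have h2 : busemann c z ≤ dist z (c (2 * u)) - 2 * u := hble (2 * u) (by linarith)
    linarith [hu2]
  rw [Real.dist_eq, abs_lt]
  constructor <;> linarith

/-- Case (III): if `x n → ξ`, `y n → ξ'` in `∂∞X` and `d(x n, o) - d(y n, o) → +∞`,
then the normalized max-distance functions converge pointwise to `β^o_ξ(z)`. -/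
theorem dmax_horofunction_singular_dominant {X : Type*} [MetricSpace X] [ProperSpace X]
    (hX : IsCATminus1 X) (o : X) (c c' : ℝ → X) (x y : ℕ → X)
    (hx : TendstoRay x o c) (hy : TendstoRay y o c')
    (hdiv : Tendsto (fun n => dist (x n) o - dist (y n) o) atTop atTop) :
    ∀ z z' : X,
      Tendsto (fun n => max (dist (x n) z) (dist (y n) z')
          - max (dist (x n) o) (dist (y n) o)) atTop (𝓝 (busemann c z)) := by
  intro z z'
  have key := busemann_key hX o c x hx z
  apply Tendsto.congr' _ key
  filter_upwards [hdiv.eventually_ge_atTop (dist o z + dist o z' + 1)] with n hn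
  have hz0 : 0 ≤ dist o z := dist_nonneg
  have hz'0 : 0 ≤ dist o z' := dist_nonneg
  have h1 : dist (y n) o ≤ dist (x n) o := by linarith
  have h2 : dist (y n) z' ≤ dist (x n) z := by
    have t1 := dist_triangle (y n) o z'
    have t2 := dist_triangle (x n) z o
    have t3 : dist z o = dist o z := dist_comm z o
    linarith
  rw [max_eq_left h2, max_eq_left h1, dist_comm z (x n), dist_comm o (x n)]
end

section
/- Let X be a CAT(-1) space and ξ, ξ', η, η' ∈ ∂∞X with (ξ, ξ') ≠ (η, η'). Then for any points p, p', q, q' ∈ X, the functions max{β^p_ξ, β^{p'}_{ξ'}} and max{β^q_η, β^{q'}_{η'}} on X × X do not differ by a constant. -/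
open Filter Topology Metric

/-! If the two functions differ by a constant `C`, sending `z'` (resp. `z`) far out along a ray
makes the second (resp. first) Busemann function irrelevant in both maxima, so `β_ξ = β_η + C`
and `β_ξ' = β_η' + C`. It remains to see that in a CAT(-1) space `β_c = β_e + C` forces the rays
`c` and `e` to be asymptotic. The point `x = c (T - C)` satisfies `β_e x = -T`, so
`cosh d(x, e t) ≲ eᵗ⁻ᵀ` for large `t`, while `d(x, e 0) ≤ T + const`. The median inequality,
iterated at step `T` along `e`, says that `t ↦ cosh d(x, e t)` is a subsolution of `f'' = f`;
comparing with the solution having these boundary values bounds `d(x, e T)` independently of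
`T`. -/

open Real

namespace IsRay

variable {X : Type*} [MetricSpace X] {c e : ℝ → X}

lemma dist_eq_sub (hc : IsRay c) {s t : ℝ} (hs : 0 ≤ s) (hst : s ≤ t) :
    dist (c s) (c t) = t - s := by
  rw [hc s t hs (hs.trans hst), abs_of_nonpos (by linarith), neg_sub]

lemma bddBelow_dist_sub (hc : IsRay c) (x : X) :
    BddBelow {r : ℝ | ∃ t : ℝ, 0 ≤ t ∧ r = dist x (c t) - t} := by
  refine ⟨-dist x (c 0), ?_⟩
  rintro r ⟨t, ht, rfl⟩
  have := dist_triangle (c 0) x (c t)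
  rw [hc.dist_eq_sub le_rfl ht, dist_comm] at this
  linarith

lemma busemann_le_s9 (hc : IsRay c) (x : X) {t : ℝ} (ht : 0 ≤ t) :
    busemann c x ≤ dist x (c t) - t :=
  csInf_le (hc.bddBelow_dist_sub x) ⟨t, ht, rfl⟩

lemma busemann_self (hc : IsRay c) {t : ℝ} (ht : 0 ≤ t) : busemann c (c t) = -t := by
  refine le_antisymm (by simpa using hc.busemann_le_s9 (c t) ht) (le_csInf ⟨_, 0, le_rfl, rfl⟩ ?_)
  rintro r ⟨u, hu, rfl⟩
  have := hc t u ht hu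
  linarith [le_abs_self (u - t), abs_sub_comm u t]

lemma exists_busemann_le (hc : IsRay c) (r : ℝ) : ∃ x, busemann c x ≤ r :=
  ⟨c (max 0 (-r)), by rw [hc.busemann_self (le_max_left _ _)]; linarith [le_max_right 0 (-r)]⟩

lemma exists_forall_ge_dist_sub_le (hc : IsRay c) (x : X) {ε : ℝ} (hε : 0 < ε) :
    ∃ t₀, ∀ t, t₀ ≤ t → dist x (c t) - t ≤ busemann c x + ε := by
  obtain ⟨r, ⟨u, hu, rfl⟩, hr⟩ :=
    exists_lt_of_csInf_lt (s := {r : ℝ | ∃ t : ℝ, 0 ≤ t ∧ r = dist x (c t) - t})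
      ⟨_, 0, le_rfl, rfl⟩ (lt_add_of_pos_right (busemann c x) hε)
  refine ⟨u, fun t hut => ?_⟩
  have := dist_triangle x (c u) (c t)
  rw [hc.dist_eq_sub hu hut] at this
  linarith

lemma rayEquiv_of_forall_ge (hc : IsRay c) (he : IsRay e) {t₀ K : ℝ}
    (h : ∀ t, t₀ ≤ t → dist (c t) (e t) ≤ K) : RayEquiv c e := by
  refine ⟨max K (2 * t₀ + dist (c 0) (e 0)), fun t ht => ?_⟩
  rcases le_total t₀ t with hle | hlt
  · exact (h t hle).trans (le_max_left _ _)
  · calc dist (c t) (e t) ≤ dist (c t) (c 0) + dist (c 0) (e 0) + dist (e 0) (e t) :=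
          dist_triangle4 _ _ _ _
      _ = 2 * t + dist (c 0) (e 0) := by
          rw [dist_comm, hc.dist_eq_sub le_rfl ht, he.dist_eq_sub le_rfl ht]; ring
      _ ≤ _ := by linarith [le_max_right K (2 * t₀ + dist (c 0) (e 0))]

end IsRay

lemma eq_add_of_forall_max_eq_max_add {α β : Type*} {f g : α → ℝ} {f' g' : β → ℝ} {C : ℝ}
    (hf' : ∀ r, ∃ y, f' y ≤ r) (hg' : ∀ r, ∃ y, g' y ≤ r)
    (h : ∀ x y, max (f x) (f' y) = max (g x) (g' y) + C) (x : α) : f x = g x + C := by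
  obtain ⟨y, hy⟩ := hg' (g x)
  obtain ⟨y', hy'⟩ := hf' (f x)
  have hle := h x y
  have hge := h x y'
  rw [max_eq_left hy] at hle
  rw [max_eq_left hy'] at hge
  linarith [le_max_left (f x) (f' y), le_max_left (g x) (g' y')]

lemma monotone_of_two_mul_le_add {a : ℝ} (ha : 1 ≤ a) {D : ℕ → ℝ} (h0 : 0 ≤ D 0)
    (h01 : D 0 ≤ D 1) (h : ∀ k, 2 * a * D (k + 1) ≤ D k + D (k + 2)) : Monotone D := by
  suffices ∀ k, 0 ≤ D k ∧ D k ≤ D (k + 1) from monotone_nat_of_le_succ fun k => (this k).2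
  intro k
  induction k with
  | zero => exact ⟨h0, h01⟩
  | succ k ih =>
    have hk := h k
    exact ⟨ih.1.trans ih.2, by nlinarith [mul_nonneg (by linarith : 0 ≤ a - 1) (ih.1.trans ih.2)]⟩

lemma mul_le_mul_add_mul_of_two_mul_le_add {a : ℝ} (ha : 1 ≤ a) {w σ : ℕ → ℝ}
    (hσ0 : σ 0 = 0) (hσ1 : 0 ≤ σ 1) (hσ : ∀ j, σ (j + 2) = 2 * a * σ (j + 1) - σ j)
    (hw : ∀ j, 2 * a * w (j + 1) ≤ w j + w (j + 2)) (k : ℕ) :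
    w 1 * σ (k + 1) ≤ w 0 * σ k + w (k + 1) * σ 1 := by
  set D : ℕ → ℝ := fun k => w 0 * σ k + w (k + 1) * σ 1 - w 1 * σ (k + 1)
  have hD0 : D 0 = 0 := by simp only [D, hσ0]; ring
  have hD : Monotone D := by
    refine monotone_of_two_mul_le_add ha hD0.ge ?_ fun j => ?_
    · simp only [D, hσ0, hσ 0]; nlinarith [hw 0]
    · simp only [D, hσ j, hσ (j + 1)]; nlinarith [hw (j + 1)]
  linarith [hD (Nat.zero_le k)]

lemma sinh_add_two_mul_eq (x T : ℝ) :
    sinh (x + 2 * T) = 2 * cosh T * sinh (x + T) - sinh x := by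
  have h₁ := sinh_add (x + T) T
  have h₂ := sinh_sub (x + T) T
  rw [add_sub_cancel_right] at h₂
  rw [show x + 2 * T = x + T + T by ring]
  linarith

lemma cosh_mul_sinh_le_exp {A t : ℝ} (hA : 0 ≤ A) (ht : 0 ≤ t) :
    cosh A * sinh t ≤ exp (A + t) / 2 := by
  rw [cosh_eq, sinh_eq, exp_add]
  have : exp (-A) ≤ exp A := exp_le_exp.2 (by linarith)
  have : exp (-t) ≤ exp t := exp_le_exp.2 (by linarith)
  nlinarith [exp_pos A, exp_pos t, exp_pos (-A), exp_pos (-t)]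

lemma exp_add_div_le_cosh_mul_sinh (D : ℝ) {L : ℝ} (hL : 1 ≤ L) :
    exp (D + L) / 8 ≤ cosh D * sinh L := by
  rw [cosh_eq, sinh_eq, exp_add]
  have : 2 ≤ exp L := by linarith [add_one_le_exp L]
  have : exp (-L) ≤ 1 := exp_le_one_iff.2 (by linarith)
  nlinarith [exp_pos D, exp_pos L, exp_pos (-D), exp_pos (-L)]

lemma le_log_of_cosh_mul_sinh_le {A B D L T α β : ℝ} (hA₀ : 0 ≤ A) (hB₀ : 0 ≤ B)
    (hT : 0 ≤ T) (hTL : T ≤ L) (hL : 1 ≤ L) (hA : A ≤ T + α) (hB : B ≤ L - T + β)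
    (h : cosh D * sinh L ≤ cosh A * sinh (L - T) + cosh B * sinh T) :
    D ≤ log (4 * (exp α + exp β)) := by
  refine (le_log_iff_exp_le (by positivity)).2 ?_
  have hA' := (cosh_mul_sinh_le_exp hA₀ (sub_nonneg.2 hTL)).trans
    (div_le_div_of_nonneg_right (exp_le_exp.2 (by linarith : A + (L - T) ≤ α + L)) zero_le_two)
  have hB' := (cosh_mul_sinh_le_exp hB₀ hT).trans
    (div_le_div_of_nonneg_right (exp_le_exp.2 (by linarith : B + T ≤ β + L)) zero_le_two)
  have := exp_add_div_le_cosh_mul_sinh D hL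
  rw [exp_add] at hA' hB' this
  nlinarith [exp_pos L]

namespace IsCATminus1

variable {X : Type*} [MetricSpace X] {c e : ℝ → X}

lemma two_cosh_mul_cosh_dist_le (hX : IsCATminus1 X) (he : IsRay e) (x : X) {t T : ℝ}
    (ht : 0 ≤ t) (hT : 0 ≤ T) :
    2 * cosh T * cosh (dist x (e (t + T))) ≤
      cosh (dist x (e t)) + cosh (dist x (e (t + 2 * T))) := by
  have h₁ := he.dist_eq_sub ht (by linarith : t ≤ t + T)
  have h₂ := he.dist_eq_sub ht (by linarith : t ≤ t + 2 * T)
  have h₃ := he.dist_eq_sub (by linarith) (by linarith : t + T ≤ t + 2 * T)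
  have hmid : IsMidpoint (e t) (e (t + T)) (e (t + 2 * T)) := by
    constructor <;> linarith
  have := hX.2 x _ _ _ hmid
  rw [h₂, show (t + 2 * T - t) / 2 = T by ring] at this
  linarith

/-- Divided by `sinh ((k + 1) * T)`, the right-hand side is the value at `T` of the solution of
`f'' = f` that agrees with `t ↦ cosh (dist x (e t))` at `0` and at `(k + 1) * T`. -/
lemma cosh_dist_mul_sinh_le (hX : IsCATminus1 X) (he : IsRay e) (x : X) {T : ℝ} (hT : 0 ≤ T)
    (k : ℕ) :
    cosh (dist x (e T)) * sinh ((k + 1) * T) ≤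
      cosh (dist x (e 0)) * sinh (k * T) + cosh (dist x (e ((k + 1) * T))) * sinh T := by
  have := mul_le_mul_add_mul_of_two_mul_le_add (one_le_cosh T)
    (w := fun j : ℕ => cosh (dist x (e (j * T)))) (σ := fun j : ℕ => sinh (j * T))
    (by simp) (sinh_nonneg_iff.2 (by simpa using hT))
    (fun j => by push_cast; rw [add_mul, add_mul, sinh_add_two_mul_eq]; ring_nf)
    (fun j => by
      have := hX.two_cosh_mul_cosh_dist_le he x (mul_nonneg j.cast_nonneg hT) hT
      push_cast
      convert this using 4 <;> ring_nf) k
  simpa using this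

theorem rayEquiv_of_busemann_eq_add (hX : IsCATminus1 X) (hc : IsRay c) (he : IsRay e) {C : ℝ}
    (h : ∀ x, busemann c x = busemann e x + C) : RayEquiv c e := by
  set a := dist (c 0) (e 0)
  refine hc.rayEquiv_of_forall_ge he (t₀ := max C 0 + 1)
    (K := |C| + log (4 * (exp (a - C) + exp 1))) fun T hT => ?_
  have hT₁ : 1 ≤ T := by linarith [le_max_right C 0]
  have hs : 0 ≤ T - C := by linarith [le_max_left C 0]
  have hbus : busemann e (c (T - C)) = -T := by
    linarith [h (c (T - C)), hc.busemann_self hs]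
  obtain ⟨t₀, ht₀⟩ := he.exists_forall_ge_dist_sub_le (c (T - C)) one_pos
  obtain ⟨k, hk⟩ := exists_nat_ge t₀
  have hk₀ : (0 : ℝ) ≤ k := k.cast_nonneg
  have hfar : dist (c (T - C)) (e ((k + 1) * T)) ≤ (k + 1) * T - T + 1 := by
    linarith [ht₀ ((k + 1) * T) (by nlinarith)]
  have hnear : dist (c (T - C)) (e 0) ≤ T + (a - C) := by
    linarith [dist_triangle (c (T - C)) (c 0) (e 0), dist_comm (c 0) (c (T - C)),
      hc.dist_eq_sub le_rfl hs]
  have hD := le_log_of_cosh_mul_sinh_le dist_nonneg dist_nonneg (by linarith) (by nlinarith)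
    (by nlinarith) hnear hfar (by
      rw [show (k + 1) * T - T = k * T by ring]
      exact hX.cosh_dist_mul_sinh_le he (c (T - C)) (by linarith) k)
  calc dist (c T) (e T) ≤ dist (c T) (c (T - C)) + dist (c (T - C)) (e T) := dist_triangle _ _ _
    _ ≤ |C| + log (4 * (exp (a - C) + exp 1)) := by
        rw [hc T (T - C) (by linarith) hs, sub_sub_cancel]
        linarith

end IsCATminus1

theorem regular_horofunctions_distinct_general {X : Type*} [MetricSpace X]
    (hX : IsCATminus1 X) (cξ cξ' cη cη' : ℝ → X)
    (h1 : IsRay cξ) (h2 : IsRay cξ') (h3 : IsRay cη) (h4 : IsRay cη')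
    (hne : ¬ (RayEquiv cξ cη ∧ RayEquiv cξ' cη')) :
    ¬ ∃ C : ℝ, ∀ z z' : X,
        max (busemann cξ z) (busemann cξ' z') =
          max (busemann cη z) (busemann cη' z') + C := by
  rintro ⟨C, hC⟩
  have hfirst : ∀ z, busemann cξ z = busemann cη z + C :=
    eq_add_of_forall_max_eq_max_add h2.exists_busemann_le h4.exists_busemann_le hC
  have hsecond : ∀ z', busemann cξ' z' = busemann cη' z' + C :=
    eq_add_of_forall_max_eq_max_add h1.exists_busemann_le h3.exists_busemann_le
      fun z' z => by rw [max_comm, hC, max_comm]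
  exact hne ⟨hX.rayEquiv_of_busemann_eq_add h1 h3 hfirst,
    hX.rayEquiv_of_busemann_eq_add h2 h4 hsecond⟩

/-- Distinct pairs of boundary points give distinct regular horofunctions:
if `(ξ, ξ') ≠ (η, η')` (here `ξ, ξ', η, η'` are represented by rays `cξ, cξ', cη, cη'`
from `p, p', q, q'` respectively, and the Busemann function `β^p_ξ` vanishing at `p` is
`busemann cξ`), then the functions `(z,z') ↦ max (β^p_ξ z) (β^p'_ξ' z')` and
`(z,z') ↦ max (β^q_η z) (β^q'_η' z')` on `X × X` do not differ by a constant. -/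
theorem regular_horofunctions_distinct {X : Type*} [MetricSpace X] [ProperSpace X]
    (hX : IsCATminus1 X) (p p' q q' : X) (cξ cξ' cη cη' : ℝ → X)
    (h1 : IsRay cξ) (h2 : IsRay cξ') (h3 : IsRay cη) (h4 : IsRay cη')
    (hp : cξ 0 = p) (hp' : cξ' 0 = p') (hq : cη 0 = q) (hq' : cη' 0 = q')
    (hne : ¬ (RayEquiv cξ cη ∧ RayEquiv cξ' cη')) :
    ¬ ∃ C : ℝ, ∀ z z' : X,
        max (busemann cξ z) (busemann cξ' z') =
          max (busemann cη z) (busemann cη' z') + C :=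
  regular_horofunctions_distinct_general hX cξ cξ' cη cη' h1 h2 h3 h4 hne
end
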